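/- Let f : ℝ → M₂(ℂ) be continuous with f(t)₁₁ = conj(f(t)₂₂), f(t)₁₂ = conj(f(t)₂₁) and trace f(t) = 0 for all t, let λ₀, μ ∈ ℝ, and let a, c : ℝ → ℂ be differentiable functions satisfying ȧ = ε f₁₁ + iμ + ε(f₁₁ a + f₁₂ c) + iμ a and ċ + 2iλ₀ c = ε f₂₁ + ε(f₂₁ a + f₂₂ c) − iμ c. Then the function H(t) := a(t) + conj(a(t)) + |a(t)|² − |c(t)|² is constant: H′(t) = 0 for all t. -/

import Mathlib

/-! With `u = 1 + a` one has `H = |u|² - |c|² - 1`, and `(u, c)' = M (u, c)` for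
`M = [[ε f₁₁ + iμ, ε f₁₂], [ε f₂₁, ε f₂₂ - iμ - 2iλ₀]]`. The symmetries of `f` make the diagonal
of `M` purely imaginary and its off-diagonal entries conjugate, so `M ∈ 𝔰𝔲(1,1)`, whose flow
preserves the indefinite form `|u|² - |c|²`. -/

open Complex

theorem HasDerivAt.mul_conj_sub_mul_conj_of_su11 {u c : ℝ → ℂ} {p q r : ℂ} {t : ℝ}
    (hp : starRingEnd ℂ p = -p) (hr : starRingEnd ℂ r = -r)
    (hu : HasDerivAt u (p * u t + q * c t) t)
    (hc : HasDerivAt c (starRingEnd ℂ q * u t + r * c t) t) :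
    HasDerivAt (fun s => u s * starRingEnd ℂ (u s) - c s * starRingEnd ℂ (c s)) 0 t := by
  have hu' := hu.star
  have hc' := hc.star
  simp only [Complex.star_def] at hu' hc'
  refine ((hu.mul hu').sub (hc.mul hc')).congr_deriv ?_
  simp only [map_add, map_mul, Complex.conj_conj]
  linear_combination (u t * starRingEnd ℂ (u t)) * hp - c t * starRingEnd ℂ (c t) * hr

theorem Matrix.conj_apply_zero_zero_of_trace_eq_zero {f : Matrix (Fin 2) (Fin 2) ℂ}
    (hconj : f 0 0 = starRingEnd ℂ (f 1 1)) (htr : f.trace = 0) :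
    starRingEnd ℂ (f 0 0) = -f 0 0 := by
  rw [Matrix.trace_fin_two, hconj] at htr
  rw [hconj, Complex.conj_conj]
  linear_combination htr

theorem stmt4_general (f : ℝ → Matrix (Fin 2) (Fin 2) ℂ)
    (hfm : ∀ t, f t 0 0 = (starRingEnd ℂ) (f t 1 1) ∧ f t 0 1 = (starRingEnd ℂ) (f t 1 0))
    (hftr : ∀ t, Matrix.trace (f t) = 0)
    (ε lam0 μ : ℝ) (a c : ℝ → ℂ)
    (ha : ∀ t, HasDerivAt a
      ((ε : ℂ) * f t 0 0 + I * μ + (ε : ℂ) * (f t 0 0 * a t + f t 0 1 * c t) + I * μ * a t) t)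
    (hc : ∀ t, HasDerivAt c
      (-(2 * I * lam0 * c t) + (ε : ℂ) * f t 1 0 + (ε : ℂ) * (f t 1 0 * a t + f t 1 1 * c t)
        - I * μ * c t) t) :
    ∀ t, HasDerivAt
      (fun s => a s + (starRingEnd ℂ) (a s) + a s * (starRingEnd ℂ) (a s)
        - c s * (starRingEnd ℂ) (c s)) 0 t := by
  intro t
  obtain ⟨h00, h01⟩ := hfm t
  have hskew := Matrix.conj_apply_zero_zero_of_trace_eq_zero h00 (hftr t)
  have h11 : f t 1 1 = -f t 0 0 := by
    linear_combination (Matrix.trace_fin_two (f t)).symm.trans (hftr t)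
  have hp : starRingEnd ℂ (ε * f t 0 0 + I * μ) = -(ε * f t 0 0 + I * μ) := by
    simp only [map_add, map_mul, Complex.conj_ofReal, Complex.conj_I, hskew]
    ring
  have hr : starRingEnd ℂ (ε * f t 1 1 - I * μ - 2 * I * lam0)
      = -(ε * f t 1 1 - I * μ - 2 * I * lam0) := by
    simp only [h11, map_sub, map_neg, map_mul, map_ofNat, Complex.conj_ofReal, Complex.conj_I,
      hskew]
    ring
  have hq : starRingEnd ℂ (ε * f t 0 1) = ε * f t 1 0 := by
    rw [map_mul, Complex.conj_ofReal, h01, Complex.conj_conj]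
  have hu : HasDerivAt (fun s => 1 + a s)
      ((ε * f t 0 0 + I * μ) * (1 + a t) + ε * f t 0 1 * c t) t :=
    ((ha t).const_add 1).congr_deriv (by ring)
  have hc' : HasDerivAt c (starRingEnd ℂ (ε * f t 0 1) * (1 + a t)
      + (ε * f t 1 1 - I * μ - 2 * I * lam0) * c t) t := by
    refine (hc t).congr_deriv ?_
    rw [hq]
    ring
  have hH : (fun s => a s + starRingEnd ℂ (a s) + a s * starRingEnd ℂ (a s)
      - c s * starRingEnd ℂ (c s))
      = fun s => (1 + a s) * starRingEnd ℂ (1 + a s) - c s * starRingEnd ℂ (c s) - 1 := by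
    funext s
    simp only [map_add, map_one]
    ring
  rw [hH]
  exact (hu.mul_conj_sub_mul_conj_of_su11 hp hr hc').sub_const 1

theorem stmt4 (f : ℝ → Matrix (Fin 2) (Fin 2) ℂ)
    (hfcont : ∀ i j, Continuous fun t => f t i j)
    (hfm : ∀ t, f t 0 0 = (starRingEnd ℂ) (f t 1 1) ∧ f t 0 1 = (starRingEnd ℂ) (f t 1 0))
    (hftr : ∀ t, Matrix.trace (f t) = 0)
    (ε lam0 μ : ℝ) (a c : ℝ → ℂ)
    (ha : ∀ t, HasDerivAt a
      ((ε : ℂ) * f t 0 0 + I * μ + (ε : ℂ) * (f t 0 0 * a t + f t 0 1 * c t) + I * μ * a t) t)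
    (hc : ∀ t, HasDerivAt c
      (-(2 * I * lam0 * c t) + (ε : ℂ) * f t 1 0 + (ε : ℂ) * (f t 1 0 * a t + f t 1 1 * c t)
        - I * μ * c t) t) :
    ∀ t, HasDerivAt
      (fun s => a s + (starRingEnd ℂ) (a s) + a s * (starRingEnd ℂ) (a s)
        - c s * (starRingEnd ℂ) (c s)) 0 t :=
  stmt4_general f hfm hftr ε lam0 μ a c ha hc
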